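/- arXiv:2207.05146 — 3 statements merged into one kernel-verified Lean document; each statement's English description precedes it below -/
import Mathlib

section
/- Let j* ∈ {1, …, N} and let x : [0, ∞) → ℝⁿ be continuously differentiable with ẋ(t) = f(x(t)) + g(x(t)) L_{j*} u(t) for all t ≥ 0, where u : [0, ∞) → ℝᵖ is continuous, and suppose h_{j*}^{i}(x(0)) ≥ 0 for all 0 ≤ i ≤ d′_{j*}. If for every t ≥ 0 and every j ∈ {1, …, N} the input satisfies ∇h_j^{d′_j}(x(t))ᵀ( f(x(t)) + g(x(t)) Lⱼ u(t) ) ≥ −α( h_j^{d′_j}(x(t)) ), then h(x(t)) ≥ 0 for all t ≥ 0. -/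
open Matrix

/-- The chain of higher-order barrier functions `h⁰ = h`,
`h^{i+1}(x) = ∇h^i(x)ᵀ f(x) + α(h^i(x))` used for actuator-failure HOCBFs. -/
noncomputable def hocbfChain (n : ℕ) (f : (Fin n → ℝ) → (Fin n → ℝ)) (α : ℝ → ℝ)
    (h : (Fin n → ℝ) → ℝ) : ℕ → ((Fin n → ℝ) → ℝ)
  | 0 => h
  | (i + 1) => fun x => fderiv ℝ (hocbfChain n f α h i) x (f x) + α (hocbfChain n f α h i x)

lemma ode_nonneg (α : ℝ → ℝ) (hmono : Monotone α) (hα0 : α 0 = 0)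
    (y y' : ℝ → ℝ)
    (hy : ∀ t : ℝ, 0 ≤ t → HasDerivWithinAt y (y' t) (Set.Ici 0) t)
    (hge : ∀ t : ℝ, 0 ≤ t → -α (y t) ≤ y' t)
    (h0 : 0 ≤ y 0) : ∀ t : ℝ, 0 ≤ t → 0 ≤ y t := by
  intro t1 ht1
  by_contra hneg
  push_neg at hneg
  have hcont : ContinuousOn y (Set.Icc 0 t1) := fun t ht =>
    ((hy t ht.1).continuousWithinAt).mono (fun s hs => hs.1)
  set S : Set ℝ := Set.Icc 0 t1 ∩ y ⁻¹' Set.Ici 0 with hSdef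
  have hSclosed : IsClosed S :=
    hcont.preimage_isClosed_of_isClosed isClosed_Icc isClosed_Ici
  have hSne : S.Nonempty := ⟨0, ⟨le_rfl, ht1⟩, h0⟩
  have hSbdd : BddAbove S := ⟨t1, fun t ht => ht.1.2⟩
  set s := sSup S with hs
  have hsS : s ∈ S := hSclosed.csSup_mem hSne hSbdd
  obtain ⟨⟨hs0, hst1⟩, hys⟩ := hsS
  have hslt : s < t1 := by
    rcases lt_or_eq_of_le hst1 with h | h
    · exact h
    · exact absurd (h ▸ hys) (not_le.mpr hneg)
  have hyneg : ∀ t ∈ Set.Ioo s t1, y t < 0 := by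
    intro t ht
    by_contra hc
    push_neg at hc
    have : t ∈ S := ⟨⟨le_trans hs0 ht.1.le, ht.2.le⟩, hc⟩
    exact absurd (le_csSup hSbdd this) (not_le.mpr ht.1)
  have hmonoy : MonotoneOn y (Set.Icc s t1) := by
    apply monotoneOn_of_deriv_nonneg (convex_Icc s t1)
      (hcont.mono (Set.Icc_subset_Icc hs0 le_rfl))
    · intro t ht
      rw [interior_Icc] at ht
      have htpos : 0 < t := lt_of_le_of_lt hs0 ht.1
      exact (((hy t htpos.le).hasDerivAt (Ici_mem_nhds htpos)).differentiableAt).differentiableWithinAt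
    · intro t ht
      rw [interior_Icc] at ht
      have htpos : 0 < t := lt_of_le_of_lt hs0 ht.1
      have hd := (hy t htpos.le).hasDerivAt (Ici_mem_nhds htpos)
      rw [hd.deriv]
      have hyt : y t ≤ 0 := (hyneg t ht).le
      have : α (y t) ≤ 0 := hα0 ▸ hmono hyt
      linarith [hge t htpos.le]
  have hys2 : 0 ≤ y s := hys
  have := hmonoy ⟨le_rfl, hst1⟩ ⟨hst1, le_rfl⟩ hst1
  linarith

/-- HOCBF-based safety under actuator failures (paper's Lemma 6).
For each failure pattern `j`, `d′_j` is a relative degree, i.e. `∇h_j^iᵀ g(x) Lⱼ = 0` for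
`i < d′_j`.  If the state starts in the intersection of the superlevel sets of the chain for
the true pattern `j*`, and the input satisfies the HOCBF constraint for every pattern at every
time, then the trajectory stays in the safe set `{x : h(x) ≥ 0}`. -/
theorem hocbf_safety_under_actuator_failures (n p N : ℕ)
    (f : (Fin n → ℝ) → (Fin n → ℝ)) (hf : LocallyLipschitz f)
    (g : (Fin n → ℝ) → Matrix (Fin n) (Fin p) ℝ)
    (hg : ∀ i j, LocallyLipschitz (fun x => g x i j))
    (L : Fin N → Matrix (Fin p) (Fin p) ℝ)
    (hLdiag : ∀ j i k, i ≠ k → L j i k = 0)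
    (hL01 : ∀ j i, L j i i = 0 ∨ L j i i = 1)
    (h : (Fin n → ℝ) → ℝ)
    (α : ℝ → ℝ) (hα : LocallyLipschitz α) (hαmono : StrictMono α) (hα0 : α 0 = 0)
    (d' : Fin N → ℕ)
    -- smoothness of each member of the chain
    (hchainC1 : ∀ (j : Fin N), ∀ i ≤ d' j, ContDiff ℝ 1 (hocbfChain n f α h i))
    -- relative-degree condition: ∇h_j^i(x)ᵀ g(x) Lⱼ = 0 for all x and all i < d′_j
    (hreldeg : ∀ (j : Fin N), ∀ i < d' j, ∀ (x : Fin n → ℝ) (w : Fin p → ℝ),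
      fderiv ℝ (hocbfChain n f α h i) x ((g x).mulVec ((L j).mulVec w)) = 0)
    (jstar : Fin N) (x : ℝ → (Fin n → ℝ)) (u : ℝ → (Fin p → ℝ)) (hu : Continuous u)
    (hx : ∀ t : ℝ, 0 ≤ t →
      HasDerivWithinAt x (f (x t) + (g (x t)).mulVec ((L jstar).mulVec (u t))) (Set.Ici 0) t)
    (hx0 : ∀ i ≤ d' jstar, 0 ≤ hocbfChain n f α h i (x 0))
    (hcbf : ∀ t : ℝ, 0 ≤ t → ∀ j : Fin N,
      -α (hocbfChain n f α h (d' j) (x t)) ≤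
        fderiv ℝ (hocbfChain n f α h (d' j)) (x t)
          (f (x t) + (g (x t)).mulVec ((L j).mulVec (u t)))) :
    ∀ t : ℝ, 0 ≤ t → 0 ≤ h (x t) := by
  have hmono := hαmono.monotone
  -- chain rule: derivative of hocbfChain i ∘ x along trajectory
  have hderiv : ∀ i ≤ d' jstar, ∀ t : ℝ, 0 ≤ t →
      HasDerivWithinAt (fun s => hocbfChain n f α h i (x s))
        (fderiv ℝ (hocbfChain n f α h i) (x t)
          (f (x t) + (g (x t)).mulVec ((L jstar).mulVec (u t)))) (Set.Ici 0) t := by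
    intro i hi t ht
    have hF : HasFDerivAt (hocbfChain n f α h i)
        (fderiv ℝ (hocbfChain n f α h i) (x t)) (x t) :=
      (((hchainC1 jstar i hi).differentiable one_ne_zero) (x t)).hasFDerivAt
    exact hF.comp_hasDerivWithinAt t (hx t ht)
  suffices key : ∀ m : ℕ, ∀ i : ℕ, i + m = d' jstar →
      ∀ t : ℝ, 0 ≤ t → 0 ≤ hocbfChain n f α h i (x t) by
    intro t ht
    exact key (d' jstar) 0 (by simp) t ht
  intro m
  induction m with
  | zero =>
    intro i him
    simp only [Nat.add_zero] at him
    subst him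
    exact ode_nonneg α hmono hα0 _ _ (hderiv _ le_rfl)
      (fun t ht => hcbf t ht jstar) (hx0 _ le_rfl)
  | succ m ih =>
    intro i him
    have him' : (i + 1) + m = d' jstar := by omega
    have hilt : i < d' jstar := by omega
    have hile : i ≤ d' jstar := hilt.le
    have hnext := ih (i + 1) him'
    apply ode_nonneg α hmono hα0 _ _ (hderiv i hile) _ (hx0 i hile)
    intro t ht
    have heq : fderiv ℝ (hocbfChain n f α h i) (x t)
        (f (x t) + (g (x t)).mulVec ((L jstar).mulVec (u t)))
        = hocbfChain n f α h (i + 1) (x t) - α (hocbfChain n f α h i (x t)) := by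
      rw [map_add, hreldeg jstar i hilt (x t) (u t)]
      show fderiv ℝ (hocbfChain n f α h i) (x t) (f (x t)) + 0 = _
      simp only [hocbfChain]
      ring
    rw [heq]
    have := hnext t ht
    linarith
end

section
/- Suppose aᵀx″ − b > 0 and { x ∈ ℝⁿ : (x − x″)ᵀΨ(x − x″) ≤ V̄ } ∩ { x ∈ ℝⁿ : aᵀx − b ≤ 0 } = ∅. Then there exists δ > 0 such that for every finite family of points x̂₁, …, x̂_k ∈ ℝⁿ with ‖x̂ᵢ − x̂ⱼ‖₂ ≤ θ̄ for all i, j, there exists u ∈ ℝᵖ such that: if some x̂ᵢ satisfies aᵀx̂ᵢ − b < δ then aᵀG u > 0; and (x̂ⱼ − x″)ᵀΨ G u < 0 for every j with (x̂ⱼ − x″)ᵀΨ(x̂ⱼ − x″) > V̄. -/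
open Matrix

private lemma dot_self_nonneg' {n : ℕ} (v : Fin n → ℝ) : 0 ≤ v ⬝ᵥ v :=
  Finset.sum_nonneg fun i _ => mul_self_nonneg _

private lemma sum_dot' {n : ℕ} {ι : Type*} (s : Finset ι) (f : ι → (Fin n → ℝ)) (w : Fin n → ℝ) :
    (∑ i ∈ s, f i) ⬝ᵥ w = ∑ i ∈ s, f i ⬝ᵥ w := by
  simp only [dotProduct, Finset.sum_apply, Finset.sum_mul]
  exact Finset.sum_comm

private lemma dot_sum' {n : ℕ} {ι : Type*} (s : Finset ι) (w : Fin n → ℝ) (f : ι → (Fin n → ℝ)) :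
    w ⬝ᵥ (∑ i ∈ s, f i) = ∑ i ∈ s, w ⬝ᵥ f i := by
  simp only [dotProduct, Finset.sum_apply, Finset.mul_sum]
  exact Finset.sum_comm

private theorem rayleigh_decomp' {n : ℕ} (A : Matrix (Fin n) (Fin n) ℝ) (hA : A.IsHermitian)
    (d : Fin n → ℝ) :
    ∃ c : Fin n → ℝ, d ⬝ᵥ d = ∑ i, c i ^ 2 ∧
      d ⬝ᵥ A.mulVec d = ∑ i, hA.eigenvalues i * c i ^ 2 := by
  classical
  set B := hA.eigenvectorBasis with hB
  set c : Fin n → ℝ := fun i => B.repr (WithLp.toLp 2 d) i with hc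
  have horth : ∀ i j, (⇑(B i) : Fin n → ℝ) ⬝ᵥ ⇑(B j) = if i = j then 1 else 0 := by
    intro i j
    have := B.orthonormal
    rw [orthonormal_iff_ite] at this
    have h2 := this i j
    rw [dotProduct_comm]
    simpa [PiLp.inner_apply, RCLike.inner_apply, dotProduct] using h2
  have hd : d = ∑ i, c i • (⇑(B i) : Fin n → ℝ) := by
    have h := B.sum_repr (WithLp.toLp 2 d)
    have h2 := congrArg (WithLp.linearEquiv 2 ℝ ((_ : Fin n) → ℝ)) h
    rw [map_sum] at h2
    simpa [WithLp.linearEquiv] using h2.symm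
  have hdot : ∀ w : Fin n → ℝ, d ⬝ᵥ w = ∑ i, c i * (⇑(B i) ⬝ᵥ w) := by
    intro w
    conv_lhs => rw [hd, sum_dot']
    simp [smul_dotProduct]
  refine ⟨c, ?_, ?_⟩
  · rw [hdot]
    congr 1; funext i
    conv_lhs => rw [hd, dot_sum']
    simp [dotProduct_smul, horth, Finset.sum_ite_eq, sq, mul_comm]
  · have hAd : A.mulVec d = ∑ i, (c i * hA.eigenvalues i) • (⇑(B i) : Fin n → ℝ) := by
      conv_lhs => rw [hd]
      rw [show A.mulVec (∑ i, c i • (⇑(B i) : Fin n → ℝ))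
          = A.mulVecLin (∑ i, c i • (⇑(B i) : Fin n → ℝ)) from rfl, map_sum]
      congr 1; funext i
      rw [_root_.map_smul, mulVecLin_apply, hA.mulVec_eigenvectorBasis]
      rw [smul_smul, mul_comm]
    rw [hAd, dot_sum']
    congr 1; funext i
    rw [dotProduct_smul]
    conv_lhs => rw [hd, sum_dot']
    simp [smul_dotProduct, horth, Finset.sum_ite_eq, sq]
    ring

/-- full-rank case of the joint safety–stability (HOSCBF–CLF) construction.
Safe region is the half-space `{x : aᵀx − b ≥ 0}`, CLF is `V(x) = (x − x″)ᵀΨ(x − x″)`,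
`λ̄` is the largest eigenvalue of `Ψ`, and `V̄ = θ̄²λ̄/2`.  If the goal center is strictly safe
and the sublevel set `{V ≤ V̄}` misses the unsafe half-space, then there is `δ > 0` such that
for any finite family of pairwise `θ̄`-close estimates there is a single control `u` meeting
both the safety and the CLF linear constraints. -/
theorem joint_safety_stability_full_rank (n p : ℕ)
    (G : Matrix (Fin n) (Fin p) ℝ) (hrank : G.rank = n)
    (a : Fin n → ℝ) (b : ℝ) (x'' : Fin n → ℝ)
    (Ψ : Matrix (Fin n) (Fin n) ℝ) (hΨsymm : Ψ.IsSymm) (hΨ : Ψ.PosDef)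
    (lam : ℝ) (hlam : IsGreatest {r : ℝ | ∃ v : Fin n → ℝ, v ≠ 0 ∧ Ψ.mulVec v = r • v} lam)
    (θ : ℝ) (hθ : 0 < θ) (Vbar : ℝ) (hVbar : Vbar = θ ^ 2 * lam / 2)
    (hgoal : 0 < a ⬝ᵥ x'' - b)
    (hsep : {x : Fin n → ℝ | (x - x'') ⬝ᵥ Ψ.mulVec (x - x'') ≤ Vbar} ∩
      {x : Fin n → ℝ | a ⬝ᵥ x - b ≤ 0} = ∅) :
    ∃ δ > (0 : ℝ), ∀ (k : ℕ) (xh : Fin k → (Fin n → ℝ)),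
      (∀ i j, Real.sqrt (∑ l, (xh i l - xh j l) ^ 2) ≤ θ) →
      ∃ u : Fin p → ℝ,
        ((∃ i, a ⬝ᵥ xh i - b < δ) → 0 < a ⬝ᵥ G.mulVec u) ∧
        (∀ j, Vbar < (xh j - x'') ⬝ᵥ Ψ.mulVec (xh j - x'') →
          (xh j - x'') ⬝ᵥ Ψ.mulVec (G.mulVec u) < 0) := by
  classical
  have hA : Ψ.IsHermitian := hΨ.1
  -- positivity of the quadratic form, real version
  have hquad_pos : ∀ x : Fin n → ℝ, x ≠ 0 → 0 < x ⬝ᵥ Ψ.mulVec x := by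
    intro x hx
    simpa using hΨ.dotProduct_mulVec_pos hx
  -- lam is positive
  have hlam_pos : 0 < lam := by
    obtain ⟨v, hv, hev⟩ := hlam.1
    have h1 : 0 < v ⬝ᵥ Ψ.mulVec v := hquad_pos v hv
    have h2 : v ⬝ᵥ Ψ.mulVec v = lam * (v ⬝ᵥ v) := by
      rw [hev]; simp [dotProduct_smul]
    have h3 : 0 < v ⬝ᵥ v := by
      rcases eq_or_lt_of_le (dot_self_nonneg' v) with h | h
      · exact absurd ((dotProduct_self_eq_zero).mp h.symm) hv
      · exact h
    nlinarith
  have hVbar_pos : 0 < Vbar := by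
    rw [hVbar]; positivity
  -- eigenvalue bounds on the quadratic form
  have hub : ∀ d : Fin n → ℝ, d ⬝ᵥ Ψ.mulVec d ≤ lam * (d ⬝ᵥ d) := by
    intro d
    obtain ⟨c, hc1, hc2⟩ := rayleigh_decomp' Ψ hA d
    rw [hc1, hc2, Finset.mul_sum]
    refine Finset.sum_le_sum fun i _ => ?_
    have hle : hA.eigenvalues i ≤ lam := by
      refine hlam.2 ⟨⇑(hA.eigenvectorBasis i), ?_, hA.mulVec_eigenvectorBasis i⟩
      intro h0
      have := hA.eigenvectorBasis.orthonormal.ne_zero i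
      apply this
      apply (WithLp.equiv 2 _).injective
      simpa using h0
    exact mul_le_mul_of_nonneg_right hle (sq_nonneg _)
  obtain ⟨mu, hmu_pos, hlb⟩ :
      ∃ mu > (0:ℝ), ∀ d : Fin n → ℝ, mu * (d ⬝ᵥ d) ≤ d ⬝ᵥ Ψ.mulVec d := by
    rcases Nat.eq_zero_or_pos n with hn | hn
    · refine ⟨1, one_pos, fun d => ?_⟩
      subst hn
      simp [dotProduct]
    · have hne : (Finset.univ : Finset (Fin n)).Nonempty := by
        simpa [Finset.univ_nonempty_iff] using Fin.pos_iff_nonempty.mp hn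
      refine ⟨Finset.univ.inf' hne hA.eigenvalues, ?_, fun d => ?_⟩
      · obtain ⟨i, _, hi⟩ := Finset.exists_mem_eq_inf' hne hA.eigenvalues
        rw [hi]
        exact hΨ.eigenvalues_pos i
      · obtain ⟨c, hc1, hc2⟩ := rayleigh_decomp' Ψ hA d
        rw [hc1, hc2, Finset.mul_sum]
        refine Finset.sum_le_sum fun i _ => ?_
        exact mul_le_mul_of_nonneg_right (Finset.inf'_le _ (Finset.mem_univ i)) (sq_nonneg _)
  -- symmetry of the bilinear form
  have hsymm : ∀ y z : Fin n → ℝ, y ⬝ᵥ Ψ.mulVec z = z ⬝ᵥ Ψ.mulVec y := by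
    intro y z
    rw [Matrix.dotProduct_mulVec, ← Matrix.mulVec_transpose, hΨsymm.eq, dotProduct_comm]
  -- key polarization estimate
  have hkey : ∀ y z : Fin n → ℝ, Vbar < y ⬝ᵥ Ψ.mulVec y → Vbar < z ⬝ᵥ Ψ.mulVec z →
      (y - z) ⬝ᵥ Ψ.mulVec (y - z) ≤ lam * θ ^ 2 → 0 < y ⬝ᵥ Ψ.mulVec z := by
    intro y z hy hz hyz
    have hexp : (y - z) ⬝ᵥ Ψ.mulVec (y - z)
        = y ⬝ᵥ Ψ.mulVec y + z ⬝ᵥ Ψ.mulVec z - 2 * (y ⬝ᵥ Ψ.mulVec z) := by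
      rw [Matrix.mulVec_sub, dotProduct_sub, sub_dotProduct,
        sub_dotProduct, hsymm z y]
      ring
    rw [hVbar] at hy hz
    nlinarith
  -- continuity of V
  have hcontV : Continuous fun x : Fin n → ℝ => (x - x'') ⬝ᵥ Ψ.mulVec (x - x'') := by
    simp only [dotProduct, mulVec, Pi.sub_apply]
    fun_prop
  have hcontf : Continuous fun x : Fin n → ℝ => a ⬝ᵥ x - b := by
    simp only [dotProduct]
    fun_prop
  -- compactness of the sublevel set
  set K : Set (Fin n → ℝ) := {x | (x - x'') ⬝ᵥ Ψ.mulVec (x - x'') ≤ Vbar} with hK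
  have hx''K : x'' ∈ K := by
    simp only [hK, Set.mem_setOf_eq, sub_self]
    simp [Matrix.mulVec_zero]
    exact hVbar_pos.le
  have hKsub : K ⊆ Metric.closedBall x'' (Real.sqrt (Vbar / mu)) := by
    intro x hx
    have hdd : (x - x'') ⬝ᵥ (x - x'') ≤ Vbar / mu := by
      have h1 := hlb (x - x'')
      have h2 : (x - x'') ⬝ᵥ Ψ.mulVec (x - x'') ≤ Vbar := hx
      rw [le_div_iff₀ hmu_pos]
      nlinarith [dot_self_nonneg' (x - x'')]
    rw [Metric.mem_closedBall]
    rw [dist_pi_le_iff (Real.sqrt_nonneg _)]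
    intro l
    rw [Real.dist_eq]
    rw [show |x l - x'' l| = Real.sqrt ((x l - x'' l)^2) by
      rw [Real.sqrt_sq_eq_abs]]
    apply Real.sqrt_le_sqrt
    calc (x l - x'' l) ^ 2 ≤ (x - x'') ⬝ᵥ (x - x'') := by
          rw [dotProduct]
          have : ∀ i : Fin n, (0:ℝ) ≤ (x i - x'' i) * (x i - x'' i) := fun i => mul_self_nonneg _
          calc (x l - x'' l)^2 = (x l - x'' l) * (x l - x'' l) := sq _
            _ ≤ ∑ i, (x i - x'' i) * (x i - x'' i) :=
              Finset.single_le_sum (fun i _ => this i) (Finset.mem_univ l)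
            _ = ∑ i, ((x - x'') i) * ((x - x'') i) := by simp
      _ ≤ Vbar / mu := hdd
  have hKcomp : IsCompact K := by
    refine (isCompact_closedBall x'' (Real.sqrt (Vbar / mu))).of_isClosed_subset ?_ hKsub
    exact isClosed_le hcontV continuous_const
  -- minimum of the linear form on K
  obtain ⟨x₀, hx₀K, hx₀min⟩ :=
    hKcomp.exists_isMinOn ⟨x'', hx''K⟩ hcontf.continuousOn
  set δ₀ : ℝ := a ⬝ᵥ x₀ - b with hδ₀
  have hδ₀pos : 0 < δ₀ := by
    by_contra h
    push_neg at h
    have : x₀ ∈ ({x : Fin n → ℝ | (x - x'') ⬝ᵥ Ψ.mulVec (x - x'') ≤ Vbar} ∩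
        {x : Fin n → ℝ | a ⬝ᵥ x - b ≤ 0}) := ⟨hx₀K, h⟩
    rw [hsep] at this
    exact this
  set δ : ℝ := min δ₀ ((a ⬝ᵥ x'' - b) / 2) with hδdef
  have hδpos : 0 < δ := lt_min hδ₀pos (by linarith)
  have hδfar : ∀ x : Fin n → ℝ, a ⬝ᵥ x - b < δ → Vbar < (x - x'') ⬝ᵥ Ψ.mulVec (x - x'') := by
    intro x hx
    by_contra h
    push_neg at h
    have hxK : x ∈ K := h
    have := hx₀min hxK
    simp only [Set.mem_setOf_eq] at this
    have hδle : δ ≤ δ₀ := min_le_left _ _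
    linarith [this, hδ₀.le, hδ₀.ge]
  -- surjectivity of G
  have hsurj : ∀ w : Fin n → ℝ, ∃ u : Fin p → ℝ, G.mulVec u = w := by
    have htop : LinearMap.range G.mulVecLin = ⊤ := by
      apply Submodule.eq_top_of_finrank_eq
      rw [show Module.finrank ℝ ↥(LinearMap.range G.mulVecLin) = G.rank from rfl, hrank]
      simp [Module.finrank_pi]
    intro w
    have : w ∈ LinearMap.range G.mulVecLin := htop ▸ Submodule.mem_top
    obtain ⟨u, hu⟩ := this
    exact ⟨u, by rwa [mulVecLin_apply] at hu⟩
  refine ⟨δ, hδpos, ?_⟩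
  intro k xh hclose
  -- pairwise closeness in the Ψ-form
  have hΨclose : ∀ i j : Fin k,
      ((xh i - x'') - (xh j - x'')) ⬝ᵥ Ψ.mulVec ((xh i - x'') - (xh j - x'')) ≤ lam * θ ^ 2 := by
    intro i j
    have h1 : ∑ l, (xh i l - xh j l) ^ 2 ≤ θ ^ 2 := by
      have h0 : (0:ℝ) ≤ ∑ l, (xh i l - xh j l) ^ 2 :=
        Finset.sum_nonneg fun l _ => sq_nonneg _
      have := hclose i j
      nlinarith [Real.sq_sqrt h0, Real.sqrt_nonneg (∑ l, (xh i l - xh j l) ^ 2)]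
    have heq : (xh i - x'') - (xh j - x'') = xh i - xh j := by
      funext l; simp only [Pi.sub_apply]; ring
    rw [heq]
    calc (xh i - xh j) ⬝ᵥ Ψ.mulVec (xh i - xh j) ≤ lam * ((xh i - xh j) ⬝ᵥ (xh i - xh j)) :=
          hub _
      _ ≤ lam * θ ^ 2 := by
          apply mul_le_mul_of_nonneg_left _ hlam_pos.le
          calc (xh i - xh j) ⬝ᵥ (xh i - xh j) = ∑ l, (xh i l - xh j l) ^ 2 := by
                simp [dotProduct, sq]
            _ ≤ θ ^ 2 := h1
  by_cases hact : ∃ i, a ⬝ᵥ xh i - b < δ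
  · obtain ⟨i₀, hi₀⟩ := hact
    have hi₀far : Vbar < (xh i₀ - x'') ⬝ᵥ Ψ.mulVec (xh i₀ - x'') := hδfar _ hi₀
    obtain ⟨u, hu⟩ := hsurj (x'' - xh i₀)
    refine ⟨u, fun _ => ?_, fun j hj => ?_⟩
    · rw [hu, dotProduct_sub]
      have hδle : δ ≤ (a ⬝ᵥ x'' - b) / 2 := min_le_right _ _
      linarith
    · rw [hu]
      have : x'' - xh i₀ = -(xh i₀ - x'') := by ring
      rw [this, Matrix.mulVec_neg, dotProduct_neg, neg_lt_zero]
      exact hkey _ _ hj hi₀far (hΨclose j i₀)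
  · by_cases hfar : ∃ j, Vbar < (xh j - x'') ⬝ᵥ Ψ.mulVec (xh j - x'')
    · obtain ⟨j₀, hj₀⟩ := hfar
      obtain ⟨u, hu⟩ := hsurj (x'' - xh j₀)
      refine ⟨u, fun h => absurd h hact, fun j hj => ?_⟩
      rw [hu]
      have : x'' - xh j₀ = -(xh j₀ - x'') := by ring
      rw [this, Matrix.mulVec_neg, dotProduct_neg, neg_lt_zero]
      exact hkey _ _ hj hj₀ (hΨclose j j₀)
    · exact ⟨0, fun h => absurd h hact, fun j hj => absurd ⟨j, hj⟩ hfar⟩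
end

section
/- Let Φ ∈ ℝ^{n×n} be symmetric positive definite with largest eigenvalue λ̄, let x′ ∈ ℝⁿ, and let p, q ∈ ℝⁿ. If ‖p − q‖₂ < √2 · λ̄^{−1/2}, (p − x′)ᵀΦ(p − x′) ≥ 1, and (q − x′)ᵀΦ(q − x′) ≥ 1, then (p − x′)ᵀΦ(q − x′) > 0. -/
open Matrix

/-- Rayleigh-type bound: if `lam` dominates every eigenvalue of the Hermitian matrix `Φ`,
then the quadratic form of `Φ` is bounded by `lam` times the squared norm. -/
lemma ellipsoid_quad_bound_aux (n : ℕ) (Φ : Matrix (Fin n) (Fin n) ℝ) (hS : Φ.IsSymm)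
    (hΦ : Φ.IsHermitian)
    (lam : ℝ) (hle : ∀ r ∈ {r : ℝ | ∃ v : Fin n → ℝ, v ≠ 0 ∧ Φ.mulVec v = r • v}, r ≤ lam)
    (w : EuclideanSpace ℝ (Fin n)) :
    w ⬝ᵥ Φ.mulVec w ≤ lam * (w ⬝ᵥ w) := by
  set b := hΦ.eigenvectorBasis
  have hev : ∀ i, hΦ.eigenvalues i ≤ lam := by
    intro i
    refine hle _ ⟨b i, ?_, hΦ.mulVec_eigenvectorBasis i⟩
    have := b.orthonormal.1 i
    intro h
    rw [EuclideanSpace.norm_eq] at this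
    simp [h] at this
  have hdot : ∀ x y : EuclideanSpace ℝ (Fin n), (inner ℝ x y : ℝ) = x ⬝ᵥ y := by
    intro x y
    simp [PiLp.inner_apply, dotProduct, mul_comm]
  have hsym : ∀ x y : EuclideanSpace ℝ (Fin n), x ⬝ᵥ Φ.mulVec y = Φ.mulVec x ⬝ᵥ y := by
    intro x y
    rw [Matrix.dotProduct_mulVec, ← Matrix.mulVec_transpose, hS.eq]
  have hbi : ∀ i, (inner ℝ (b i) w : ℝ) = (inner ℝ w (b i) : ℝ) := fun i => real_inner_comm _ _
  have expand : ∀ y : EuclideanSpace ℝ (Fin n),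
      w ⬝ᵥ y = ∑ i, (inner ℝ w (b i) : ℝ) * (inner ℝ (b i) y : ℝ) := by
    intro y
    rw [← hdot, ← b.sum_inner_mul_inner]
  have key : w ⬝ᵥ Φ.mulVec w = ∑ i, hΦ.eigenvalues i * (inner ℝ w (b i) : ℝ) ^ 2 := by
    erw [expand (WithLp.toLp 2 (Φ.mulVec w))]
    refine Finset.sum_congr rfl fun i _ => ?_
    have : (inner ℝ (b i) (WithLp.toLp 2 (Φ.mulVec w)) : ℝ)
        = hΦ.eigenvalues i * (inner ℝ (b i) w : ℝ) := by
      rw [hdot, WithLp.ofLp_toLp, hsym]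
      erw [hΦ.mulVec_eigenvectorBasis i]
      rw [hdot]
      simp [smul_dotProduct]
      exact Or.inl rfl
    rw [this, hbi]; ring
  have key2 : w ⬝ᵥ w = ∑ i, (inner ℝ w (b i) : ℝ) ^ 2 := by
    rw [expand w]
    exact Finset.sum_congr rfl fun i _ => by rw [hbi]; ring
  rw [key, key2, Finset.mul_sum]
  exact Finset.sum_le_sum fun i _ => by nlinarith [sq_nonneg ((inner ℝ w (b i) : ℝ)), hev i]

/-- two points on or outside the unit ellipsoid of a positive definite quadratic
form, whose Euclidean distance is less than `√2 / √λ̄` (`λ̄` the largest eigenvalue of `Φ`),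
make an acute angle in the `Φ`-inner product centered at `x′`. -/
theorem ellipsoid_acute_angle (n : ℕ)
    (Φ : Matrix (Fin n) (Fin n) ℝ) (hΦsymm : Φ.IsSymm) (hΦ : Φ.PosDef)
    (lam : ℝ) (hlam : IsGreatest {r : ℝ | ∃ v : Fin n → ℝ, v ≠ 0 ∧ Φ.mulVec v = r • v} lam)
    (x' P Q : Fin n → ℝ)
    (hdist : Real.sqrt (∑ i, (P i - Q i) ^ 2) < Real.sqrt 2 / Real.sqrt lam)
    (hP : 1 ≤ (P - x') ⬝ᵥ Φ.mulVec (P - x'))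
    (hQ : 1 ≤ (Q - x') ⬝ᵥ Φ.mulVec (Q - x')) :
    0 < (P - x') ⬝ᵥ Φ.mulVec (Q - x') := by
  -- positivity of lam
  obtain ⟨z, hz0, hzeig⟩ := hlam.1
  have hzpos : 0 < z ⬝ᵥ Φ.mulVec z := by simpa using hΦ.re_dotProduct_pos hz0
  have hzz : 0 < z ⬝ᵥ z := by
    rcases lt_or_ge 0 (z ⬝ᵥ z) with h | h
    · exact h
    · have h0 : z ⬝ᵥ z = 0 := le_antisymm h (Finset.sum_nonneg fun i _ => mul_self_nonneg _)
      exact absurd (dotProduct_self_eq_zero.mp h0) hz0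
  have hlampos : 0 < lam := by
    have : z ⬝ᵥ Φ.mulVec z = lam * (z ⬝ᵥ z) := by
      rw [hzeig, dotProduct_smul, smul_eq_mul]
    nlinarith
  -- squared distance bound
  have hS0 : (0:ℝ) ≤ ∑ i, (P i - Q i) ^ 2 := Finset.sum_nonneg fun i _ => sq_nonneg _
  have hlt : lam * ((P - Q) ⬝ᵥ (P - Q)) < 2 := by
    have hPQ : (P - Q) ⬝ᵥ (P - Q) = ∑ i, (P i - Q i) ^ 2 := by
      simp [dotProduct, sq]
    have h1 : Real.sqrt (∑ i, (P i - Q i) ^ 2) ^ 2 < (Real.sqrt 2 / Real.sqrt lam) ^ 2 := by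
      apply pow_lt_pow_left₀ hdist (Real.sqrt_nonneg _) (by norm_num)
    rw [Real.sq_sqrt hS0, div_pow, Real.sq_sqrt (by norm_num : (0:ℝ) ≤ 2),
      Real.sq_sqrt hlampos.le] at h1
    rw [hPQ]
    calc lam * (∑ i, (P i - Q i) ^ 2) < lam * (2 / lam) := by
          exact (mul_lt_mul_iff_right₀ hlampos).mpr h1
      _ = 2 := by field_simp
  -- quadratic form bound on the difference
  have hquad : (P - Q) ⬝ᵥ Φ.mulVec (P - Q) ≤ lam * ((P - Q) ⬝ᵥ (P - Q)) :=
    ellipsoid_quad_bound_aux n Φ hΦsymm hΦ.1 lam hlam.2 (WithLp.toLp 2 (P - Q))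
  -- expansion and symmetry
  have hsym : (Q - x') ⬝ᵥ Φ.mulVec (P - x') = (P - x') ⬝ᵥ Φ.mulVec (Q - x') := by
    rw [Matrix.dotProduct_mulVec, ← Matrix.mulVec_transpose, hΦsymm.eq,
      dotProduct_comm]
  have hexp : (P - Q) ⬝ᵥ Φ.mulVec (P - Q)
      = (P - x') ⬝ᵥ Φ.mulVec (P - x') + (Q - x') ⬝ᵥ Φ.mulVec (Q - x')
        - 2 * ((P - x') ⬝ᵥ Φ.mulVec (Q - x')) := by
    have hPQ' : P - Q = (P - x') - (Q - x') := by abel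
    rw [hPQ', sub_dotProduct, Matrix.mulVec_sub, dotProduct_sub,
      dotProduct_sub, hsym]
    ring
  linarith
end
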